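/- arXiv:1905.03478 — 2 statements merged into one kernel-verified Lean document; each statement's English description precedes it below -/
import Mathlib

section
/- A morphism of schemes f : X → Y is a universal homeomorphism if and only if it is integral, surjective, and radicial (universally injective). -/
open CategoryTheory AlgebraicGeometry

/-!
A universal homeomorphism is in particular universally closed and universally injective, and,
being a homeomorphism onto its target, affine (Stacks 04DE); universally closed affine morphisms
are integral. Conversely integral, surjective and universally injective morphisms are stable under
base change, and each one is a continuous closed bijection, hence a homeomorphism.
-/

namespace AlgebraicGeometry

open MorphismProperty

variable {X Y : Scheme} (f : X ⟶ Y)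

lemma isAffineHom_of_isHomeomorph (hf : IsHomeomorph f.base) : IsAffineHom f :=
  isAffineHom_of_isInducing f hf.isInducing (by simp [hf.surjective.range_eq])

lemma isIntegralHom_of_universally_isHomeomorph
    (hf : (topologically @IsHomeomorph).universally f) : IsIntegralHom f := by
  have : UniversallyClosed f := ⟨universally_mono (fun _ _ _ hg ↦ hg.isClosedMap) f hf⟩
  have : IsAffineHom f :=
    isAffineHom_of_isHomeomorph f (universally_le (topologically @IsHomeomorph) f hf)
  exact IsIntegralHom.iff_universallyClosed_and_isAffineHom.mpr ⟨‹_›, ‹_›⟩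

lemma isHomeomorph_of_isIntegralHom_of_surjective_of_universallyInjective
    [IsIntegralHom f] [Surjective f] [UniversallyInjective f] : IsHomeomorph f.base :=
  isHomeomorph_iff_continuous_isClosedMap_bijective.mpr
    ⟨f.continuous, f.isClosedMap, f.injective, f.surjective⟩

end AlgebraicGeometry

open MorphismProperty

/-- A morphism of schemes is a universal homeomorphism if and only if it is
integral, surjective and radicial (universally injective). -/
theorem universal_homeomorphism_iff_integral_surjective_radicial
    {X Y : Scheme} (f : X ⟶ Y) :
    (MorphismProperty.universally
        (topologically fun {α β} [TopologicalSpace α] [TopologicalSpace β]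
          (g : α → β) => IsHomeomorph g)) f ↔
      IsIntegralHom f ∧ Surjective f ∧ UniversallyInjective f := by
  constructor
  · intro hf
    exact ⟨isIntegralHom_of_universally_isHomeomorph f hf,
      ⟨(universally_le _ f hf).surjective⟩,
      ⟨universally_mono (fun _ _ _ hg ↦ hg.injective) f hf⟩⟩
  · rintro ⟨hi, hs, hu⟩ X' Y' _ _ f' hpb
    have : IsIntegralHom f' := of_isPullback hpb.flip hi
    have : Surjective f' := of_isPullback hpb.flip hs
    have : UniversallyInjective f' := of_isPullback hpb.flip hu
    exact isHomeomorph_of_isIntegralHom_of_surjective_of_universallyInjective f'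
end

section
/- The subset W(R)_rat of W(R) consisting of rational power series (quotients p(t)/q(t) of polynomials with constant term 1) is a subring of the ring of big Witt vectors W(R), when R is a field (or more generally for rational functions over a commutative ring). -/
open PowerSeries

/-- The underlying set of the ring of big Witt vectors of `R`:
power series with constant term `1`. -/
def WittV (R : Type) [CommRing R] : Type :=
  {f : PowerSeries R // PowerSeries.constantCoeff f = 1}

/-- Functoriality of `WittV`. -/
noncomputable def WittMap {R S : Type} [CommRing R] [CommRing S] (φ : R →+* S) :
    WittV R → WittV S :=
  fun f => ⟨PowerSeries.map φ f.1, by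
    rw [← PowerSeries.coeff_zero_eq_constantCoeff_apply, PowerSeries.coeff_map,
      PowerSeries.coeff_zero_eq_constantCoeff_apply, f.2, map_one]⟩

/-- The Witt vector `1 + a·t`. -/
noncomputable def lin {R : Type} [CommRing R] (a : R) : WittV R :=
  ⟨1 + PowerSeries.C a * PowerSeries.X, by simp⟩

/-- The addition of an explicitly given commutative ring structure. -/
def addOf {α : Type} (inst : CommRing α) : α → α → α := by
  letI := inst; exact fun a b => a + b

/-- The multiplication of an explicitly given commutative ring structure. -/
def mulOf {α : Type} (inst : CommRing α) : α → α → α := by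
  letI := inst; exact fun a b => a * b

/-- The unit of an explicitly given commutative ring structure. -/
def oneOf {α : Type} (inst : CommRing α) : α := by
  letI := inst; exact 1

/-- A Witt vector is rational if it is a quotient of two polynomials with
constant coefficient `1`. -/
def IsRatW {R : Type} [CommRing R] (f : WittV R) : Prop :=
  ∃ p q : Polynomial R, p.coeff 0 = 1 ∧ q.coeff 0 = 1 ∧
    f.1 * (q : PowerSeries R) = (p : PowerSeries R)

/-!
Addition of Witt vectors is multiplication of power series, so the rational ones form an
additive subgroup. For the product, pass to an algebraic closure `L` of `K`, using
functoriality. Over `L` a polynomial with constant coefficient `1` is a product of factors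
`1 + a t`, so a rational Witt vector is a difference of two sums of Witt vectors `1 + a t`;
these span a ring because `(1 + a t) ∗ (1 + b t) = 1 + a b t`. Finally, rationality descends
from `L` to `K`: a `K`-linear retraction `L → K` applied coefficientwise to an equation
`f q = p` with `f ∈ K[[t]]` gives such an equation over `K`.
-/

theorem Polynomial.exists_eq_multiset_prod_one_add_C_mul_X {K : Type} [Field K] [IsAlgClosed K]
    {p : Polynomial K} (hp : p.coeff 0 = 1) :
    ∃ s : Multiset K, p = (s.map fun a => 1 + C a * X).prod := by
  have hroot_ne_zero : ∀ r ∈ p.roots, r ≠ 0 := by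
    rintro r hr rfl
    rw [mem_roots', IsRoot, ← coeff_zero_eq_eval_zero, hp] at hr
    exact one_ne_zero hr.2
  have hfactor (r : K) (hr : r ≠ 0) : X - C r = C (-r) * (1 + C (-r⁻¹) * X) := by
    rw [mul_add, ← mul_assoc, ← C_mul, neg_mul_neg, mul_inv_cancel₀ hr, C_1, one_mul, C_neg]
    ring
  set g := ((p.roots.map fun r => -r⁻¹).map fun a => 1 + C a * X).prod
  have hg : g.coeff 0 = 1 := by
    rw [← constantCoeff_apply, map_multiset_prod]
    simp
  have hpg : p = C (p.leadingCoeff * (p.roots.map fun r => -r).prod) * g := by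
    conv_lhs => rw [(IsAlgClosed.splits p).eq_prod_roots,
      Multiset.map_congr rfl fun r hr => hfactor r (hroot_ne_zero r hr)]
    rw [Multiset.prod_map_mul, C_mul, mul_assoc, map_multiset_prod, Multiset.map_map]
    simp only [g, Multiset.map_map]
    rfl
  rw [hpg, coeff_C_mul, hg, mul_one] at hp
  exact ⟨_, by rw [hpg, hp, C_1, one_mul]⟩

namespace WittV

theorem val_lin {R : Type} [CommRing R] (a : R) :
    (lin a).1 = ((1 + Polynomial.C a * Polynomial.X : Polynomial R) : PowerSeries R) := by
  simp [lin]

theorem isRatW_lin {R : Type} [CommRing R] (a : R) : IsRatW (lin a) :=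
  ⟨1 + Polynomial.C a * Polynomial.X, 1, by simp, by simp,
    by rw [val_lin, Polynomial.coe_one, mul_one]⟩

theorem isRatW_wittMap {R S : Type} [CommRing R] [CommRing S] (φ : R →+* S) {f : WittV R}
    (hf : IsRatW f) : IsRatW (WittMap φ f) := by
  obtain ⟨p, q, hp, hq, hf⟩ := hf
  refine ⟨p.map φ, q.map φ, by simp [hp], by simp [hq], ?_⟩
  change PowerSeries.map φ f.1 * _ = _
  simpa only [map_mul, Polynomial.polynomial_map_coe] using congrArg (PowerSeries.map φ) hf

theorem isRatW_of_isRatW_wittMap {K L : Type} [Field K] [CommRing L] [Nontrivial L] (φ : K →+* L)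
    {f : WittV K} (hf : IsRatW (WittMap φ f)) : IsRatW f := by
  obtain ⟨P, Q, hP, hQ, hf⟩ := hf
  let _ : Algebra K L := φ.toAlgebra
  obtain ⟨π, hπ⟩ := (Algebra.linearMap K L).exists_leftInverse_of_injective
    (LinearMap.ker_eq_bot.mpr φ.injective)
  have hπφ (a : K) : π (φ a) = a := LinearMap.congr_fun hπ a
  have hπ_mul (a : K) (x : L) : π (φ a * x) = a * π x := π.map_smul a x
  let descend (P : Polynomial L) : Polynomial K :=
    ⟨⟨P.toFinsupp.coeff.mapRange π π.map_zero⟩⟩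
  have coeff_descend (P : Polynomial L) (n : ℕ) : (descend P).coeff n = π (P.coeff n) := rfl
  refine ⟨descend P, descend Q, by rw [coeff_descend, hP, ← map_one φ, hπφ],
    by rw [coeff_descend, hQ, ← map_one φ, hπφ], ?_⟩
  ext n
  have hn := congrArg (PowerSeries.coeff n) hf
  change PowerSeries.coeff n (PowerSeries.map φ f.1 * (Q : PowerSeries L)) = _ at hn
  simp only [PowerSeries.coeff_mul, Polynomial.coeff_coe, PowerSeries.coeff_map] at hn ⊢
  simp only [coeff_descend, ← hπ_mul, ← map_sum, hn]

section AdditiveStructure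

variable {R : Type} [CommRing R] [CommRing (WittV R)]
  (hadd : ∀ f g : WittV R, (f + g).1 = f.1 * g.1)
include hadd

theorem val_zero : (0 : WittV R).1 = 1 := by
  have hunit : IsUnit (0 : WittV R).1 := by
    rw [isUnit_iff_constantCoeff, (0 : WittV R).2]
    exact isUnit_one
  exact (IsUnit.mul_eq_left hunit).mp (by rw [← hadd, add_zero])

theorem val_mul_val_neg (f : WittV R) : f.1 * (-f).1 = 1 := by
  rw [← hadd, add_neg_cancel, val_zero hadd]

theorem val_multiset_sum (s : Multiset (WittV R)) : s.sum.1 = (s.map fun f => f.1).prod := by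
  induction s using Multiset.induction_on with
  | empty => exact val_zero hadd
  | cons f s ih => rw [Multiset.sum_cons, hadd, ih, Multiset.map_cons, Multiset.prod_cons]

def ratAddSubgroup : AddSubgroup (WittV R) where
  carrier := {f | IsRatW f}
  zero_mem' :=
    ⟨1, 1, Polynomial.coeff_one_zero, Polynomial.coeff_one_zero, by simp [val_zero hadd]⟩
  add_mem' := by
    rintro f g ⟨p, q, hp, hq, hf⟩ ⟨p', q', hp', hq', hg⟩
    refine ⟨p * p', q * q', by simp [Polynomial.mul_coeff_zero, hp, hp'],
      by simp [Polynomial.mul_coeff_zero, hq, hq'], ?_⟩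
    rw [hadd, Polynomial.coe_mul, Polynomial.coe_mul, ← hf, ← hg]
    ring
  neg_mem' := by
    rintro f ⟨p, q, hp, hq, hf⟩
    refine ⟨q, p, hq, hp, ?_⟩
    rw [← hf, ← mul_assoc, mul_comm (-f).1, val_mul_val_neg hadd, one_mul]

theorem val_multiset_sum_map_lin (s : Multiset R) :
    ((s.map lin).sum : WittV R).1 =
      ((s.map fun a => 1 + Polynomial.C a * Polynomial.X).prod : Polynomial R) := by
  rw [val_multiset_sum hadd, Multiset.map_map, ← Polynomial.coeToPowerSeries.ringHom_apply,
    map_multiset_prod, Multiset.map_map]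
  exact congrArg _ (Multiset.map_congr rfl fun a _ => val_lin a)

theorem closure_range_lin_le_ratAddSubgroup :
    AddSubgroup.closure (Set.range lin) ≤ ratAddSubgroup hadd :=
  AddSubgroup.closure_le _ |>.mpr <| Set.range_subset_iff.mpr isRatW_lin

end AdditiveStructure

theorem mem_nonUnitalSubringClosure_range_lin_iff {R : Type} [CommRing R]
    [CommRing (WittV R)] (hlin : ∀ a b : R, lin a * lin b = lin (a * b)) {f : WittV R} :
    f ∈ NonUnitalSubring.closure (Set.range lin) ↔ f ∈ AddSubgroup.closure (Set.range lin) := by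
  let linSemigroup : Subsemigroup (WittV R) :=
    { carrier := Set.range lin
      mul_mem' := by
        rintro _ _ ⟨a, rfl⟩ ⟨b, rfl⟩
        exact ⟨a * b, (hlin a b).symm⟩ }
  rw [NonUnitalSubring.mem_closure_iff,
    show Subsemigroup.closure (Set.range lin) = linSemigroup from linSemigroup.closure_eq]
  rfl

section AlgClosed

variable {K : Type} [Field K] [IsAlgClosed K] [CommRing (WittV K)]
  (hadd : ∀ f g : WittV K, (f + g).1 = f.1 * g.1)
include hadd

theorem isRatW_iff_mem_closure_range_lin {f : WittV K} :
    IsRatW f ↔ f ∈ AddSubgroup.closure (Set.range lin) := by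
  refine ⟨fun ⟨p, q, hp, hq, hf⟩ => ?_, fun h => closure_range_lin_le_ratAddSubgroup hadd h⟩
  obtain ⟨s, rfl⟩ := Polynomial.exists_eq_multiset_prod_one_add_C_mul_X hp
  obtain ⟨t, rfl⟩ := Polynomial.exists_eq_multiset_prod_one_add_C_mul_X hq
  have hsum : f + (t.map lin).sum = (s.map lin).sum :=
    Subtype.ext <| by rw [hadd, val_multiset_sum_map_lin hadd, val_multiset_sum_map_lin hadd, hf]
  have hmem (u : Multiset K) : (u.map lin).sum ∈ AddSubgroup.closure (Set.range lin) :=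
    multiset_sum_mem _ fun _ hx => by
      obtain ⟨a, -, rfl⟩ := Multiset.mem_map.mp hx
      exact AddSubgroup.subset_closure ⟨a, rfl⟩
  rw [eq_sub_of_add_eq hsum]
  exact sub_mem (hmem s) (hmem t)

theorem isRatW_mul_of_isAlgClosed (hlin : ∀ a b : K, lin a * lin b = lin (a * b))
    {f g : WittV K} (hf : IsRatW f) (hg : IsRatW g) : IsRatW (f * g) := by
  simp only [isRatW_iff_mem_closure_range_lin hadd,
    ← mem_nonUnitalSubringClosure_range_lin_iff hlin] at hf hg ⊢
  exact mul_mem hf hg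

end AlgClosed

end WittV

/-- The rational Witt vectors form a subring of the ring of big Witt vectors,
over a field `K`.  Here the ring of big Witt vectors is given by any family of
commutative ring structures on `W(R) = 1 + tR[[t]]` whose addition is
multiplication of power series, whose unit is `1 + t`, and whose
multiplication `∗` is functorial in `R` and satisfies
`(1+at) ∗ (1+bt) = 1+abt`. -/
theorem rational_witt_vectors_subring
    (m : ∀ (R : Type) [CommRing R], WittV R → WittV R → WittV R)
    (hfun : ∀ (R S : Type) [CommRing R] [CommRing S] (φ : R →+* S) (f g : WittV R),
      WittMap φ (m R f g) = m S (WittMap φ f) (WittMap φ g))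
    (hlin : ∀ (R : Type) [CommRing R] (a b : R), m R (lin a) (lin b) = lin (a * b))
    (instW : ∀ (R : Type) [CommRing R], CommRing (WittV R))
    (hadd : ∀ (R : Type) [CommRing R] (f g : WittV R),
      (addOf (instW R) f g).1 = f.1 * g.1)
    (hmul : ∀ (R : Type) [CommRing R] (f g : WittV R), mulOf (instW R) f g = m R f g)
    (hone : ∀ (R : Type) [CommRing R], (oneOf (instW R)).1 = 1 + PowerSeries.X)
    (K : Type) [Field K] :
    ∃ S : @Subring (WittV K) (instW K).toNonAssocRing, ∀ f : WittV K, f ∈ S ↔ IsRatW f := by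
  let L := AlgebraicClosure K
  let φ := algebraMap K L
  let _ : CommRing (WittV K) := instW K
  let _ : CommRing (WittV L) := instW L
  have hmap_mul (f g : WittV K) : WittMap φ (f * g) = WittMap φ f * WittMap φ g :=
    (congrArg (WittMap φ) (hmul K f g)).trans <| (hfun K L φ f g).trans (hmul L _ _).symm
  have hlin_mul (a b : L) : lin a * lin b = lin (a * b) := (hmul L _ _).trans (hlin L a b)
  have hone_eq : (1 : WittV K) = lin 1 := Subtype.ext <| (hone K).trans (by simp [lin])
  refine ⟨{ WittV.ratAddSubgroup (hadd K) with
    one_mem' := hone_eq ▸ WittV.isRatW_lin 1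
    mul_mem' := fun {f g} hf hg => WittV.isRatW_of_isRatW_wittMap φ ?_ }, fun _ => Iff.rfl⟩
  rw [hmap_mul]
  exact WittV.isRatW_mul_of_isAlgClosed (hadd L) hlin_mul
    (WittV.isRatW_wittMap φ hf) (WittV.isRatW_wittMap φ hg)
end
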